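/- For integers 0 ≤ k ≤ h, let f(h,k) be the maximum number of leaves of a rooted binary tree of height at most h no restriction of which is a balanced rooted binary tree of height more than k. Then f(h,k) = 2^k when h = k or k = 0, and f(h,k) = f(h−1,k) + f(h−1,k−1) whenever 0 < k < h. -/

import Mathlib

/-!
# Rooted binary phylogenetic trees

`RTree L` is the type of rooted binary trees with leaves labelled by elements of `L`:
every internal vertex has exactly two children (a left child and a right child), and
a tree with one leaf is a single vertex.
-/

inductive RTree (L : Type) : Type
  | leaf : L → RTree L
  | node : RTree L → RTree L → RTree L

namespace RTree

variable {L : Type}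

/-- The list of leaf labels of a rooted binary tree, read from left to right. -/
def leafList : RTree L → List L
  | leaf b => [b]
  | node l r => leafList l ++ leafList r

/-- The number of leaves of a rooted binary tree. -/
def numLeaves (T : RTree L) : ℕ := T.leafList.length

/-- The set of leaf labels of a rooted binary tree. -/
def leafSet (T : RTree L) : Set L := {b | b ∈ T.leafList}

/-- The height of a rooted binary tree: the maximum distance from the root to a leaf. -/
def height : RTree L → ℕ
  | leaf _ => 0
  | node l r => max (height l) (height r) + 1

/-- A rooted binary tree is balanced if all of its leaves are at the same distance
from the root. -/
def IsBalanced : RTree L → Prop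
  | leaf _ => True
  | node l r => IsBalanced l ∧ IsBalanced r ∧ height l = height r

/-- A rooted binary tree is phylogenetic if its leaves are labelled bijectively by a
finite set, i.e. all leaf labels are distinct. -/
def IsPhylo (T : RTree L) : Prop := T.leafList.Nodup

/-- `Embeds S T` is the subtree relation `S ⪯ T`: there is an injective map `f` from the
vertices of `S` to the vertices of `T` such that `f x = x` for every leaf `x` of `S`
(leaves being identified across trees by their labels) and
`f (x ∧ y) = f x ∧ f y` for all vertices `x`, `y` of `S`, where `∧` denotes the most
recent common ancestor.  Equivalently (for trees with distinct leaf labels), `S` is the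
restriction of `T` to the leaf set of `S`, up to rooted isomorphism; this structural
characterization is taken as the definition. -/
inductive Embeds : RTree L → RTree L → Prop
  | leaf (b : L) : Embeds (RTree.leaf b) (RTree.leaf b)
  | left {S l r : RTree L} : Embeds S l → Embeds S (RTree.node l r)
  | right {S l r : RTree L} : Embeds S r → Embeds S (RTree.node l r)
  | pair {s₁ s₂ l r : RTree L} :
      Embeds s₁ l → Embeds s₂ r → Embeds (RTree.node s₁ s₂) (RTree.node l r)
  | pair_swap {s₁ s₂ l r : RTree L} :
      Embeds s₁ r → Embeds s₂ l → Embeds (RTree.node s₁ s₂) (RTree.node l r)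

/-- `mast T₁ T₂` is the maximum cardinality of a subset `X ⊆ L(T₁) ∩ L(T₂)` such that
the restrictions `T₁|X` and `T₂|X` are isomorphic; equivalently, the maximum number of
leaves of a rooted binary phylogenetic tree `S` with `S ⪯ T₁` and `S ⪯ T₂`. -/
noncomputable def mast (T₁ T₂ : RTree L) : ℕ :=
  sSup {n | ∃ S : RTree L, S.IsPhylo ∧ Embeds S T₁ ∧ Embeds S T₂ ∧ S.numLeaves = n}

end RTree

/-- `fExt h k` is the maximum number of leaves of a rooted binary (phylogenetic) tree of
height at most `h` no restriction of which is a balanced rooted binary tree of height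
more than `k`.  (A restriction of `T` is any rooted binary tree `S` with `S ⪯ T`.) -/
noncomputable def fExt (h k : ℕ) : ℕ :=
  sSup {n | ∃ T : RTree ℕ, T.IsPhylo ∧ T.height ≤ h ∧
    (∀ S : RTree ℕ, RTree.Embeds S T → S.IsBalanced → S.height ≤ k) ∧ T.numLeaves = n}


/-!
A tree of height at most `h + 1` avoiding balanced restrictions of height `k + 2` is a leaf or
a pair of subtrees of height at most `h`, both avoiding height `k + 2`; moreover one of them even
avoids height `k + 1`, for otherwise cutting balanced restrictions of height `k + 1` out of both
sides and joining them would give a balanced restriction of height `k + 2`. Conversely, joining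
extremal trees for `(h, k + 1)` and `(h, k)` on disjoint labels avoids height `k + 2`.
This gives `f(h+1, k+1) = f(h, k+1) + f(h, k)` for all `h, k`. For `h ≤ k` the constraint is
vacuous and the perfect tree of height `h` is extremal, while only a leaf has no balanced
restriction of height `1`.
-/

namespace RTree

variable {L M : Type}

@[simp]
theorem numLeaves_leaf (b : L) : (leaf b).numLeaves = 1 := rfl

@[simp]
theorem numLeaves_node (l r : RTree L) : (node l r).numLeaves = l.numLeaves + r.numLeaves :=
  List.length_append

theorem numLeaves_le_two_pow (T : RTree L) : T.numLeaves ≤ 2 ^ T.height := by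
  induction T with
  | leaf b => simp [height]
  | node l r ihl ihr =>
    have hl : 2 ^ l.height ≤ 2 ^ max l.height r.height :=
      Nat.pow_le_pow_right two_pos (le_max_left ..)
    have hr : 2 ^ r.height ≤ 2 ^ max l.height r.height :=
      Nat.pow_le_pow_right two_pos (le_max_right ..)
    rw [numLeaves_node, height, pow_succ]
    omega

theorem IsPhylo.of_node {l r : RTree L} (hT : (node l r).IsPhylo) : l.IsPhylo ∧ r.IsPhylo :=
  (List.nodup_append.mp hT).imp_right And.left

namespace Embeds

@[refl]
theorem refl (T : RTree L) : Embeds T T := by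
  induction T with
  | leaf b => exact .leaf b
  | node l r ihl ihr => exact .pair ihl ihr

theorem eq_of_leaf {S : RTree L} {b : L} (e : Embeds S (.leaf b)) : S = .leaf b := by
  cases e; rfl

theorem trans {A B C : RTree L} (h₁ : Embeds A B) (h₂ : Embeds B C) : Embeds A C := by
  induction h₂ generalizing A with
  | leaf => exact h₁
  | left _ ih => exact .left (ih h₁)
  | right _ ih => exact .right (ih h₁)
  | pair _ _ ih₁ ih₂ =>
    cases h₁ with
    | left e => exact .left (ih₁ e)
    | right e => exact .right (ih₂ e)
    | pair e₁ e₂ => exact .pair (ih₁ e₁) (ih₂ e₂)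
    | pair_swap e₁ e₂ => exact .pair_swap (ih₂ e₁) (ih₁ e₂)
  | pair_swap _ _ ih₁ ih₂ =>
    cases h₁ with
    | left e => exact .right (ih₁ e)
    | right e => exact .left (ih₂ e)
    | pair e₁ e₂ => exact .pair_swap (ih₁ e₁) (ih₂ e₂)
    | pair_swap e₁ e₂ => exact .pair (ih₂ e₁) (ih₁ e₂)

theorem height_le {S T : RTree L} (e : Embeds S T) : S.height ≤ T.height := by
  induction e <;> simp only [height] <;> omega

end Embeds

theorem exists_embeds_leaf (T : RTree L) : ∃ b, Embeds (leaf b) T := by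
  induction T with
  | leaf b => exact ⟨b, .leaf b⟩
  | node l _ ihl _ => exact ihl.imp fun _ => .left

theorem IsBalanced.exists_embeds_height_eq {S : RTree L} (hS : S.IsBalanced) {m : ℕ}
    (hm : m ≤ S.height) : ∃ S', Embeds S' S ∧ S'.IsBalanced ∧ S'.height = m := by
  induction S with
  | leaf b => exact ⟨leaf b, .leaf b, trivial, (Nat.le_zero.mp hm).symm⟩
  | node l r ihl _ =>
    rcases hm.eq_or_lt with rfl | hlt
    · exact ⟨node l r, .refl _, hS, rfl⟩
    obtain ⟨hl, _, heq⟩ := hS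
    simp only [height, heq, max_self] at hlt
    obtain ⟨S', e, hS'⟩ := ihl hl (by omega)
    exact ⟨S', .left e, hS'⟩

section Map

def map (f : L → M) : RTree L → RTree M
  | leaf b => leaf (f b)
  | node l r => node (map f l) (map f r)

variable (f : L → M)

theorem leafList_map (T : RTree L) : (T.map f).leafList = T.leafList.map f := by
  induction T with
  | leaf b => rfl
  | node l r ihl ihr => simp [map, leafList, ihl, ihr]

@[simp]
theorem numLeaves_map (T : RTree L) : (T.map f).numLeaves = T.numLeaves := by
  simp [numLeaves, leafList_map]

@[simp]
theorem height_map (T : RTree L) : (T.map f).height = T.height := by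
  induction T with
  | leaf b => rfl
  | node l r ihl ihr => simp [map, height, ihl, ihr]

@[simp]
theorem isBalanced_map (T : RTree L) : (T.map f).IsBalanced ↔ T.IsBalanced := by
  induction T with
  | leaf b => rfl
  | node l r ihl ihr => simp [map, IsBalanced, ihl, ihr]

theorem exists_eq_map_of_embeds_map {f : L → M} {S : RTree M} {T : RTree L}
    (e : Embeds S (T.map f)) : ∃ S', Embeds S' T ∧ S = S'.map f := by
  induction T generalizing S with
  | leaf b => exact ⟨leaf b, .leaf b, e.eq_of_leaf⟩
  | node l r ihl ihr =>
    cases e with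
    | left e => exact (ihl e).imp fun _ => And.imp_left .left
    | right e => exact (ihr e).imp fun _ => And.imp_left .right
    | pair e₁ e₂ =>
      obtain ⟨S₁, e₁', rfl⟩ := ihl e₁
      obtain ⟨S₂, e₂', rfl⟩ := ihr e₂
      exact ⟨node S₁ S₂, .pair e₁' e₂', rfl⟩
    | pair_swap e₁ e₂ =>
      obtain ⟨S₁, e₁', rfl⟩ := ihr e₁
      obtain ⟨S₂, e₂', rfl⟩ := ihl e₂
      exact ⟨node S₁ S₂, .pair_swap e₁' e₂', rfl⟩

end Map

def AvoidsBalanced (k : ℕ) (T : RTree L) : Prop :=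
  ∀ S, Embeds S T → S.IsBalanced → S.height ≤ k

namespace AvoidsBalanced

variable {k : ℕ} {T : RTree L}

theorem of_height_le (hT : T.height ≤ k) : T.AvoidsBalanced k :=
  fun _ e _ => e.height_le.trans hT

theorem mono {k' : ℕ} (hT : T.AvoidsBalanced k) (hk : k ≤ k') : T.AvoidsBalanced k' :=
  fun S e hS => (hT S e hS).trans hk

theorem map (hT : T.AvoidsBalanced k) (f : L → M) : (T.map f).AvoidsBalanced k := by
  intro S e hS
  obtain ⟨S', e', rfl⟩ := exists_eq_map_of_embeds_map e
  rw [height_map]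
  exact hT S' e' ((isBalanced_map f S').mp hS)

theorem exists_height_eq_succ (hT : ¬ T.AvoidsBalanced k) :
    ∃ S, Embeds S T ∧ S.IsBalanced ∧ S.height = k + 1 := by
  simp only [AvoidsBalanced, not_forall, not_le] at hT
  obtain ⟨S, e, hS, hk⟩ := hT
  obtain ⟨S', e', hS'⟩ := hS.exists_embeds_height_eq hk
  exact ⟨S', e'.trans e, hS'⟩

end AvoidsBalanced

theorem avoidsBalanced_zero_iff {T : RTree L} : T.AvoidsBalanced 0 ↔ T.height = 0 := by
  refine ⟨fun hT => ?_, fun hT => .of_height_le hT.le⟩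
  cases T with
  | leaf b => rfl
  | node l r =>
    obtain ⟨a, ea⟩ := exists_embeds_leaf l
    obtain ⟨b, eb⟩ := exists_embeds_leaf r
    exact absurd (hT _ (.pair ea eb) ⟨trivial, trivial, rfl⟩) (by simp [height])

theorem avoidsBalanced_node_iff {l r : RTree L} {k : ℕ} :
    (node l r).AvoidsBalanced (k + 1) ↔
      l.AvoidsBalanced (k + 1) ∧ r.AvoidsBalanced (k + 1) ∧
        (l.AvoidsBalanced k ∨ r.AvoidsBalanced k) := by
  constructor
  · intro hT
    refine ⟨fun S e => hT S e.left, fun S e => hT S e.right, ?_⟩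
    by_contra! hlr
    obtain ⟨S₁, e₁, hS₁, h₁⟩ := AvoidsBalanced.exists_height_eq_succ hlr.1
    obtain ⟨S₂, e₂, hS₂, h₂⟩ := AvoidsBalanced.exists_height_eq_succ hlr.2
    have := hT _ (.pair e₁ e₂) ⟨hS₁, hS₂, h₁.trans h₂.symm⟩
    simp only [height, h₁, h₂, max_self] at this
    omega
  · rintro ⟨hl, hr, hlr⟩ S e hS
    cases e with
    | left e => exact hl S e hS
    | right e => exact hr S e hS
    | pair e₁ e₂ =>
      obtain ⟨hS₁, hS₂, heq⟩ := hS
      have := hlr.imp (fun hl => hl _ e₁ hS₁) (fun hr => hr _ e₂ hS₂)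
      simp only [height, heq, max_self]
      omega
    | pair_swap e₁ e₂ =>
      obtain ⟨hS₁, hS₂, heq⟩ := hS
      have := hlr.imp (fun hl => hl _ e₂ hS₂) (fun hr => hr _ e₁ hS₁)
      simp only [height, heq, max_self]
      omega

/-- Relabelling by parity keeps the leaf labels of `l` and `r` apart. -/
def join (l r : RTree ℕ) : RTree ℕ :=
  node (l.map (2 * ·)) (r.map (2 * · + 1))

section Join

variable {l r : RTree ℕ}

@[simp]
theorem numLeaves_join : (join l r).numLeaves = l.numLeaves + r.numLeaves := by
  simp [join]

@[simp]
theorem height_join : (join l r).height = max l.height r.height + 1 := by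
  simp [join, height]

theorem IsPhylo.join (hl : l.IsPhylo) (hr : r.IsPhylo) : (join l r).IsPhylo := by
  simp only [RTree.join, IsPhylo, leafList, leafList_map, List.nodup_append, List.mem_map]
  refine ⟨hl.map fun _ _ _ => by omega, hr.map fun _ _ _ => by omega, ?_⟩
  rintro _ ⟨a, -, rfl⟩ _ ⟨b, -, rfl⟩
  omega

theorem AvoidsBalanced.join {k : ℕ} (hl : l.AvoidsBalanced (k + 1)) (hr : r.AvoidsBalanced k) :
    (join l r).AvoidsBalanced (k + 1) :=
  avoidsBalanced_node_iff.mpr ⟨hl.map _, (hr.mono k.le_succ).map _, .inr (hr.map _)⟩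

end Join

def perfect : ℕ → RTree ℕ
  | 0 => leaf 0
  | n + 1 => join (perfect n) (perfect n)

theorem isPhylo_perfect (n : ℕ) : (perfect n).IsPhylo := by
  induction n with
  | zero => exact List.nodup_singleton 0
  | succ n ih => exact ih.join ih

@[simp]
theorem height_perfect (n : ℕ) : (perfect n).height = n := by
  induction n with
  | zero => rfl
  | succ n ih => simp [perfect, ih]

@[simp]
theorem numLeaves_perfect (n : ℕ) : (perfect n).numLeaves = 2 ^ n := by
  induction n with
  | zero => rfl
  | succ n ih => simp [perfect, ih, pow_succ, mul_two]

end RTree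

open RTree

def fExtSizes (h k : ℕ) : Set ℕ :=
  {n | ∃ T : RTree ℕ, T.IsPhylo ∧ T.height ≤ h ∧ T.AvoidsBalanced k ∧ T.numLeaves = n}

section FExt

variable {h k : ℕ}

theorem bddAbove_fExtSizes (h k : ℕ) : BddAbove (fExtSizes h k) := by
  refine ⟨2 ^ h, ?_⟩
  rintro _ ⟨T, -, hh, -, rfl⟩
  exact T.numLeaves_le_two_pow.trans (Nat.pow_le_pow_right two_pos hh)

theorem one_mem_fExtSizes (h k : ℕ) : 1 ∈ fExtSizes h k :=
  ⟨leaf 0, List.nodup_singleton 0, Nat.zero_le h, .of_height_le (Nat.zero_le k), rfl⟩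

theorem le_fExt {T : RTree ℕ} (hT : T.IsPhylo) (hh : T.height ≤ h)
    (hk : T.AvoidsBalanced k) :
    T.numLeaves ≤ fExt h k :=
  le_csSup (bddAbove_fExtSizes h k) ⟨T, hT, hh, hk, rfl⟩

theorem fExt_le {m : ℕ}
    (hm : ∀ T : RTree ℕ, T.IsPhylo → T.height ≤ h → T.AvoidsBalanced k → T.numLeaves ≤ m) :
    fExt h k ≤ m :=
  csSup_le ⟨1, one_mem_fExtSizes h k⟩ fun _ ⟨T, hT, hh, hk, hn⟩ =>
    hn ▸ hm T hT hh hk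

theorem exists_numLeaves_eq_fExt (h k : ℕ) :
    ∃ T : RTree ℕ, T.IsPhylo ∧ T.height ≤ h ∧ T.AvoidsBalanced k ∧ T.numLeaves = fExt h k :=
  Nat.sSup_mem ⟨1, one_mem_fExtSizes h k⟩ (bddAbove_fExtSizes h k)

theorem one_le_fExt (h k : ℕ) : 1 ≤ fExt h k :=
  le_csSup (bddAbove_fExtSizes h k) (one_mem_fExtSizes h k)

theorem fExt_of_le (hhk : h ≤ k) : fExt h k = 2 ^ h := by
  refine le_antisymm (fExt_le fun T _ hh _ => ?_) ?_
  · exact T.numLeaves_le_two_pow.trans (Nat.pow_le_pow_right two_pos hh)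
  · simpa using le_fExt (isPhylo_perfect h) (height_perfect h).le (.of_height_le (by simpa))

theorem fExt_zero (h : ℕ) : fExt h 0 = 1 := by
  refine le_antisymm (fExt_le fun T _ _ hT => ?_) (one_le_fExt h 0)
  simpa [avoidsBalanced_zero_iff.mp hT] using T.numLeaves_le_two_pow

theorem fExt_succ_succ_le (h k : ℕ) : fExt (h + 1) (k + 1) ≤ fExt h (k + 1) + fExt h k := by
  refine fExt_le fun T hT hh hA => ?_
  cases T with
  | leaf b => simpa using (one_le_fExt h (k + 1)).trans (Nat.le_add_right ..)
  | node l r =>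
    obtain ⟨hl, hr, hlr⟩ := avoidsBalanced_node_iff.mp hA
    obtain ⟨hpl, hpr⟩ := hT.of_node
    simp only [height, Nat.add_le_add_iff_right, max_le_iff] at hh
    rw [numLeaves_node]
    rcases hlr with hl' | hr'
    · rw [add_comm]
      exact add_le_add (le_fExt hpr hh.2 hr) (le_fExt hpl hh.1 hl')
    · exact add_le_add (le_fExt hpl hh.1 hl) (le_fExt hpr hh.2 hr')

theorem le_fExt_succ_succ (h k : ℕ) : fExt h (k + 1) + fExt h k ≤ fExt (h + 1) (k + 1) := by
  obtain ⟨T₁, hp₁, hh₁, hA₁, hn₁⟩ := exists_numLeaves_eq_fExt h (k + 1)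
  obtain ⟨T₂, hp₂, hh₂, hA₂, hn₂⟩ := exists_numLeaves_eq_fExt h k
  have := le_fExt (h := h + 1) (hp₁.join hp₂) (by simp [hh₁, hh₂]) (hA₁.join hA₂)
  rwa [numLeaves_join, hn₁, hn₂] at this

theorem fExt_succ_succ (h k : ℕ) : fExt (h + 1) (k + 1) = fExt h (k + 1) + fExt h k :=
  (fExt_succ_succ_le h k).antisymm (le_fExt_succ_succ h k)

end FExt

theorem stmt_6_general (h k : ℕ) :
    ((h = k ∨ k = 0) → fExt h k = 2 ^ k) ∧
    (0 < k → k < h → fExt h k = fExt (h - 1) k + fExt (h - 1) (k - 1)) := by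
  refine ⟨?_, fun hk hkh => ?_⟩
  · rintro (rfl | rfl)
    · exact fExt_of_le le_rfl
    · exact fExt_zero h
  · obtain ⟨k, rfl⟩ := Nat.exists_eq_add_one_of_ne_zero hk.ne'
    obtain ⟨h, rfl⟩ := Nat.exists_eq_add_one_of_ne_zero (by omega : h ≠ 0)
    simpa using fExt_succ_succ h k

/-- `f(h,k) = 2^k` when `h = k` or `k = 0`, and
`f(h,k) = f(h-1,k) + f(h-1,k-1)` whenever `0 < k < h`. -/
theorem stmt_6 (h k : ℕ) (hkh : k ≤ h) :
    ((h = k ∨ k = 0) → fExt h k = 2 ^ k) ∧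
    (0 < k → k < h → fExt h k = fExt (h - 1) k + fExt (h - 1) (k - 1)) :=
  stmt_6_general h k
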